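/- arXiv:2003.01169 — 4 statements merged into one kernel-verified Lean document; each statement's English description precedes it below -/
import Mathlib

section
/- Let φ(y) = (1+y)(log(1+y) − 1) + 1 for y > −1. Then for every y ∈ (−1, 1), φ(y) ≥ y²/3. -/
/-!
On `[0, 1)` use the Padé bound `log (1 + y) ≥ 2y / (2 + y)`, read off from the first term of the
series `log ((1 + u) / (1 - u)) = 2 ∑ u ^ (2k+1) / (2k+1)`; it gives `φ(y) ≥ y² / (2 + y)`.
On `(-1, 0]` use `sinh t ≤ t` at `t = log (1 + y) ≤ 0`, i.e. `log x ≥ (x - x⁻¹) / 2`; it gives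
`φ(y) ≥ y² / 2`.
-/

open Real

lemma two_mul_sub_one_div_add_one_le_log {x : ℝ} (hx : 1 ≤ x) :
    2 * ((x - 1) / (x + 1)) ≤ log x := by
  set u := (x - 1) / (x + 1) with hu
  have hu₀ : 0 ≤ u := div_nonneg (by linarith) (by linarith)
  have hu₁ : u < 1 := (div_lt_one (by linarith)).2 (by linarith)
  have hlog : log (1 + u) - log (1 - u) = log x := by
    rw [← log_div (by linarith) (by linarith)]
    congr 1
    rw [hu]
    field_simp
    ring
  have hsum := hasSum_log_sub_log_of_abs_lt_one (abs_lt.2 ⟨by linarith, hu₁⟩)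
  rw [hlog] at hsum
  simpa using le_hasSum hsum 0 fun k _ => by positivity

lemma sub_inv_div_two_le_log {x : ℝ} (hx₀ : 0 < x) (hx₁ : x ≤ 1) :
    (x - x⁻¹) / 2 ≤ log x := by
  rw [← sinh_log hx₀]
  exact sinh_le_self_iff.2 (log_nonpos hx₀.le hx₁)

/-- Taylor-expansion inequality: for `φ(y) = (1+y)(log(1+y) − 1) + 1`,
we have `φ(y) ≥ y²/3` for all `y ∈ (−1, 1)`. -/
theorem phi_ge_sq_div_three (y : ℝ) (hy₁ : -1 < y) (hy₂ : y < 1) :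
    (1 + y) * (Real.log (1 + y) - 1) + 1 ≥ y ^ 2 / 3 := by
  have hpos : 0 < 1 + y := by linarith
  rcases le_or_gt 0 y with hy | hy
  · have hlog := two_mul_sub_one_div_add_one_le_log (x := 1 + y) (by linarith)
    have hpade : y ^ 2 / (y + 2) ≤ (1 + y) * (log (1 + y) - 1) + 1 := by
      have : y ^ 2 / (y + 2) = (1 + y) * (2 * ((1 + y - 1) / (1 + y + 1)) - 1) + 1 := by
        field_simp
        ring
      rw [this]
      gcongr
    calc y ^ 2 / 3 ≤ y ^ 2 / (y + 2) := by gcongr; linarith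
      _ ≤ _ := hpade
  · have hlog := sub_inv_div_two_le_log hpos (by linarith)
    have hsinh : y + y ^ 2 / 2 ≤ (1 + y) * log (1 + y) := by
      have : y + y ^ 2 / 2 = (1 + y) * ((1 + y - (1 + y)⁻¹) / 2) := by
        field_simp
        ring
      rw [this]
      gcongr
    linarith [sq_nonneg y]
end

section
/- Let h(x) = x(log x − 1) + 1 for x > 0. Then for every x ∈ (0, 2), h(x) ≥ (1/3)(x − 1)². -/
/-!
The left-hand side is `klFun x = x log x + 1 - x`, whose derivative is `log x`, so the
difference `klFun x - (x - 1)² / 3` has derivative `log x - (2/3)(x - 1)` and vanishes at `1`.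
On `(0, 1]` this derivative is nonpositive because `log x ≤ x - 1`; on `[1, 2]` it is
nonnegative because `log` lies above its chord `(x - 1) log 2` and `log 2 > 2/3`.
Hence the difference attains its minimum `0` on `(0, 2)` at `1`.
-/

open Real Set InformationTheory

lemma log_le_mul_sub_one_of_le_one {c x : ℝ} (hx₀ : 0 < x) (hx₁ : x ≤ 1) (hc : c ≤ 1) :
    log x ≤ c * (x - 1) := by
  nlinarith [log_le_sub_one_of_pos hx₀]

lemma log_two_mul_sub_one_le_log {x : ℝ} (hx₁ : 1 ≤ x) (hx₂ : x ≤ 2) :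
    log 2 * (x - 1) ≤ log x := by
  have hchord := strictConcaveOn_log_Ioi.concaveOn.2 (mem_Ioi.2 one_pos) (mem_Ioi.2 two_pos)
    (sub_nonneg.2 hx₂) (sub_nonneg.2 hx₁) (by ring)
  simp only [smul_eq_mul, log_one, mul_zero, zero_add] at hchord
  rwa [show (2 - x) * 1 + (x - 1) * 2 = x by ring, mul_comm] at hchord

lemma two_thirds_mul_sub_one_le_log {x : ℝ} (hx₁ : 1 ≤ x) (hx₂ : x ≤ 2) :
    2 / 3 * (x - 1) ≤ log x := by
  nlinarith [log_two_mul_sub_one_le_log hx₁ hx₂, log_two_gt_d9]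

lemma hasDerivAt_klFun_sub_sq_div_three {x : ℝ} (hx : x ≠ 0) :
    HasDerivAt (fun t ↦ klFun t - (t - 1) ^ 2 / 3) (log x - 2 / 3 * (x - 1)) x := by
  refine ((hasDerivAt_klFun hx).sub
    ((((hasDerivAt_id x).sub_const 1).pow 2).div_const 3)).congr_deriv ?_
  simp only [id, Nat.cast_ofNat]
  ring

lemma isMinOn_klFun_sub_sq_div_three :
    IsMinOn (fun t ↦ klFun t - (t - 1) ^ 2 / 3) (Ioo 0 2) 1 := by
  have hderiv : ∀ t ∈ Ioi (0 : ℝ), HasDerivAt (fun t ↦ klFun t - (t - 1) ^ 2 / 3)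
      (log t - 2 / 3 * (t - 1)) t := fun t ht ↦ hasDerivAt_klFun_sub_sq_div_three (ne_of_gt ht)
  have hdiff : ∀ s ⊆ Ioi (0 : ℝ),
      DifferentiableOn ℝ (fun t ↦ klFun t - (t - 1) ^ 2 / 3) s :=
    fun s hs t ht ↦ (hderiv t (hs ht)).differentiableAt.differentiableWithinAt
  refine isMinOn_Ioo_of_deriv (hderiv 1 (mem_Ioi.2 one_pos)).continuousAt
    (hdiff _ Ioo_subset_Ioi_self) (hdiff _ fun t ht ↦ lt_trans one_pos ht.1) ?_ ?_
  · intro t ht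
    rw [(hderiv t ht.1).deriv, sub_nonpos]
    exact log_le_mul_sub_one_of_le_one ht.1 ht.2.le (by norm_num)
  · intro t ht
    rw [(hderiv t (lt_trans one_pos ht.1)).deriv, sub_nonneg]
    exact two_thirds_mul_sub_one_le_log ht.1.le ht.2.le

/-- Claim 1 core inequality: for `h(x) = x(log x − 1) + 1`,
we have `h(x) ≥ (1/3)(x − 1)²` for all `x ∈ (0, 2)`. -/
theorem h_ge_third_sq (x : ℝ) (hx₀ : 0 < x) (hx₂ : x < 2) :
    x * (Real.log x - 1) + 1 ≥ (1 / 3) * (x - 1) ^ 2 := by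
  have hmin := isMinOn_klFun_sub_sq_div_three ⟨hx₀, hx₂⟩
  simp only [mem_ofPred_eq, klFun_apply, log_one] at hmin
  linarith
end

section
/- For all real numbers a, b with 0 < a, 0 < b and a < 2b, one has a·log(a/b) − (a − b) ≥ (a − b)²/(3b). -/
private lemma aux_log_lb (t : ℝ) (ht : 0 < t) : 1 - t⁻¹ ≤ Real.log t := by
  have h := Real.log_le_sub_one_of_pos (inv_pos.mpr ht)
  rw [Real.log_inv] at h
  linarith

set_option maxHeartbeats 2000000 in
private lemma key_ineq (x : ℝ) (hx : 0 < x) (hx2 : x < 2) :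
    (x - 1) ^ 2 / 3 ≤ x * Real.log x - (x - 1) := by
  rcases le_or_gt x 1.2 with h | h
  · -- use t = x^(1/4) and log t ≥ 1 - 1/t
    set t := x ^ ((1 : ℝ) / 4) with htdef
    have ht : 0 < t := Real.rpow_pos_of_pos hx _
    have ht4 : t ^ (4 : ℕ) = x := by
      rw [htdef, ← Real.rpow_natCast (x ^ ((1 : ℝ) / 4)) 4, ← Real.rpow_mul hx.le]
      norm_num
    have hlog : Real.log x = 4 * Real.log t := by
      rw [htdef, Real.log_rpow hx]; ring
    have hlb := aux_log_lb t ht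
    have hinv : t * t⁻¹ = 1 := mul_inv_cancel₀ ht.ne'
    have h1 : 4 * t ^ 4 - 4 * t ^ 3 ≤ x * Real.log x := by
      rw [hlog, ← ht4]
      have h2 : (0 : ℝ) ≤ 4 * t ^ 4 := by positivity
      nlinarith [mul_le_mul_of_nonneg_left hlb h2]
    have ht12 : t ^ 4 ≤ 1.2 := by rw [ht4]; exact h
    have hbr : (1 + t + t ^ 2 + t ^ 3) ^ 2 ≤ 9 * t ^ 2 + 6 * t + 3 := by
      nlinarith [sq_nonneg t, sq_nonneg (t - 1), sq_nonneg (t + 1), sq_nonneg (t ^ 2 - 1),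
        mul_pos ht ht, mul_pos (mul_pos ht ht) ht, sq_nonneg (t ^ 2 - t), sq_nonneg (t ^ 3 - 1)]
    have hfac : (0 : ℝ) ≤ (t - 1) ^ 2 * (9 * t ^ 2 + 6 * t + 3 - (1 + t + t ^ 2 + t ^ 3) ^ 2) :=
      mul_nonneg (sq_nonneg _) (by linarith)
    nlinarith [h1, hfac, ht4]
  · have hlog2 := Real.log_two_gt_d9
    rcases le_or_gt x 1.35 with h' | h'
    · -- anchor at c = 2^(1/4) = sqrt (sqrt 2)
      set c := Real.sqrt (Real.sqrt 2) with hcdef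
      have hs2 : (0 : ℝ) ≤ Real.sqrt 2 := Real.sqrt_nonneg 2
      have hc : 0 < c := Real.sqrt_pos.mpr (Real.sqrt_pos.mpr (by norm_num))
      have hlogc : Real.log c = Real.log 2 / 4 := by
        rw [hcdef, Real.log_sqrt hs2, Real.log_sqrt (by norm_num)]; ring
      have hcsq : c ^ 2 = Real.sqrt 2 := Real.sq_sqrt hs2
      have hsq2 : Real.sqrt 2 < 1.4142136 := by
        nlinarith [Real.sq_sqrt (show (0:ℝ) ≤ 2 by norm_num), hs2]
      have hcub : c < 1.1892072 := by nlinarith [hcsq, hc]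
      -- log x ≥ log c + 1 - c/x
      have hdiv : 0 < x / c := div_pos hx hc
      have hlb := aux_log_lb (x / c) hdiv
      have hlogd : Real.log (x / c) = Real.log x - Real.log c :=
        Real.log_div hx.ne' hc.ne'
      have hxinv : (x / c)⁻¹ = c / x := by
        rw [inv_div]
      rw [hlogd, hxinv] at hlb
      -- so log x ≥ log c + 1 - c/x ; multiply by x
      have hcx : c / x * x = c := div_mul_cancel₀ c hx.ne'
      have h1 : x * Real.log c + x - c ≤ x * Real.log x := by
        have := mul_le_mul_of_nonneg_left hlb hx.le
        nlinarith [this, hcx]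
      rw [hlogc] at h1
      nlinarith [h1, hlog2, hcub, hx]
    · rcases le_or_gt x 1.75 with h'' | h''
      · -- anchor at c = sqrt 2
        set c := Real.sqrt 2 with hcdef
        have hc : 0 < c := Real.sqrt_pos.mpr (by norm_num)
        have hlogc : Real.log c = Real.log 2 / 2 := by
          rw [hcdef, Real.log_sqrt (by norm_num)]
        have hsq2 : c < 1.4142136 := by
          nlinarith [Real.sq_sqrt (show (0:ℝ) ≤ 2 by norm_num), hc.le]
        have hdiv : 0 < x / c := div_pos hx hc
        have hlb := aux_log_lb (x / c) hdiv
        have hlogd : Real.log (x / c) = Real.log x - Real.log c :=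
          Real.log_div hx.ne' hc.ne'
        have hxinv : (x / c)⁻¹ = c / x := by rw [inv_div]
        rw [hlogd, hxinv] at hlb
        have hcx : c / x * x = c := div_mul_cancel₀ c hx.ne'
        have h1 : x * Real.log c + x - c ≤ x * Real.log x := by
          have := mul_le_mul_of_nonneg_left hlb hx.le
          nlinarith [this, hcx]
        rw [hlogc] at h1
        nlinarith [h1, hlog2, hsq2, hx]
      · -- anchor at 2
        have hdiv : 0 < x / 2 := by linarith
        have hlb := aux_log_lb (x / 2) hdiv
        have hlogd : Real.log (x / 2) = Real.log x - Real.log 2 :=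
          Real.log_div hx.ne' (by norm_num)
        have hxinv : (x / 2)⁻¹ = 2 / x := by rw [inv_div]
        rw [hlogd, hxinv] at hlb
        have hlb2 : x - 2 ≤ x * (Real.log x - Real.log 2) := by
          calc x - 2 = x * (1 - 2 / x) := by field_simp
          _ ≤ x * (Real.log x - Real.log 2) := mul_le_mul_of_nonneg_left hlb hx.le
        have h1 : x * Real.log 2 + x - 2 ≤ x * Real.log x := by nlinarith [hlb2]
        have h4 : x * 0.6931471803 < x * Real.log 2 := by
          exact mul_lt_mul_of_pos_left hlog2 hx
        nlinarith [h1, h4, mul_nonneg (by linarith : (0:ℝ) ≤ 2 - x)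
          (by linarith : (0:ℝ) ≤ x - 1.75)]

/-- Per-increment core inequality in the proof of local uniform strong concavity:
for `0 < a`, `0 < b` with `a < 2b`, `a·log(a/b) − (a − b) ≥ (a − b)²/(3b)`. -/
theorem increment_kl_lower_bound (a b : ℝ) (ha : 0 < a) (hb : 0 < b) (hab : a < 2 * b) :
    a * Real.log (a / b) - (a - b) ≥ (a - b) ^ 2 / (3 * b) := by
  have hx : 0 < a / b := div_pos ha hb
  have hx2 : a / b < 2 := (div_lt_iff₀ hb).mpr (by linarith)
  set x := a / b with hxdef
  have key := key_ineq x hx hx2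
  have hxb : x * b = a := div_mul_cancel₀ a hb.ne'
  rw [← hxb]
  set l := Real.log x with hldef
  have h3 : b * b * (x - 1) ^ 2 ≤ 3 * (b * b) * (x * l - (x - 1)) := by
    nlinarith [mul_le_mul_of_nonneg_left key (show (0:ℝ) ≤ 3 * (b * b) by positivity)]
  rw [ge_iff_le, div_le_iff₀ (by positivity : (0 : ℝ) < 3 * b)]
  nlinarith [h3]
end

section
/- Let c > 0 and let f, g : [0, τ] → ℝ be functions with sup_{u ∈ [0,τ]} |f(u) − g(u)| ≤ c/4. Let s, t ∈ [0, τ] be such that f(t) − f(s) ≥ c. Then g(t) − g(s) ≥ (f(t) − f(s))/2 > 0, and with h(x) = x(log x − 1) + 1, one has h((f(t) − f(s))/(g(t) − g(s))) ≥ (1/3)·((f(t) − f(s))/(g(t) − g(s)) − 1)². -/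
/-!
Since `f` and `g` are `c/4`-close, the increments `A = f t - f s` and `B = g t - g s` differ by at
most `c/2 ≤ A/2`, so `A/2 ≤ B` and the ratio `x = A/B` lies in `(0, 2]`. There
`x (log x - 1) + 1 - (x - 1)²/3 = x (log x - (x - 1)(x + 2)/(3x))`, and the bracket is nonnegative
by the lower bound `2(x - 1)/(x + 1) ≤ log x` for `x ≥ 1` and `(x - x⁻¹)/2 ≤ log x` (that is,
`sinh y ≤ y` for `y ≤ 0`) for `x ≤ 1`.
-/

namespace Real

lemma sub_inv_div_two_le_log {x : ℝ} (hx0 : 0 < x) (hx1 : x ≤ 1) : (x - x⁻¹) / 2 ≤ log x := by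
  rw [← sinh_log hx0, sinh_le_self_iff]
  exact log_nonpos hx0.le hx1

lemma two_mul_sub_one_div_add_one_le_log {x : ℝ} (hx : 1 ≤ x) :
    2 * (x - 1) / (x + 1) ≤ log x := by
  have h := le_log_one_add_of_nonneg (sub_nonneg.mpr hx)
  rwa [add_sub_cancel, show x - 1 + 2 = x + 1 by ring] at h

lemma sub_one_mul_add_two_div_le_log {x : ℝ} (hx0 : 0 < x) (hx2 : x ≤ 2) :
    (x - 1) * (x + 2) / (3 * x) ≤ log x := by
  rcases le_total x 1 with hx1 | hx1
  · refine le_trans (le_of_sub_nonneg ?_) (sub_inv_div_two_le_log hx0 hx1)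
    have h : (x - x⁻¹) / 2 - (x - 1) * (x + 2) / (3 * x) = (1 - x) ^ 2 / (6 * x) := by
      field_simp; ring
    rw [h]; positivity
  · refine le_trans (le_of_sub_nonneg ?_) (two_mul_sub_one_div_add_one_le_log hx1)
    have h : 2 * (x - 1) / (x + 1) - (x - 1) * (x + 2) / (3 * x)
        = (x - 1) ^ 2 * (2 - x) / (3 * x * (x + 1)) := by
      field_simp; ring
    rw [h]
    have : 0 ≤ 2 - x := by linarith
    positivity

lemma sq_sub_one_div_three_le_mul_log_sub_one_add_one {x : ℝ} (hx0 : 0 < x) (hx2 : x ≤ 2) :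
    1 / 3 * (x - 1) ^ 2 ≤ x * (log x - 1) + 1 := by
  have h := mul_le_mul_of_nonneg_left (sub_one_mul_add_two_div_le_log hx0 hx2) hx0.le
  rw [mul_div_assoc', mul_comm 3 x, mul_div_mul_left _ _ hx0.ne'] at h
  linarith

end Real

/-- Claim 1 in full form (radius of contraction): if `f` and `g` are uniformly within
`c/4` of each other on `[0, τ]` and the increment `f(t) − f(s)` is at least `c`, then
`g(t) − g(s) ≥ (f(t) − f(s))/2 > 0` and
`h((f(t) − f(s))/(g(t) − g(s))) ≥ (1/3)((f(t) − f(s))/(g(t) − g(s)) − 1)²`,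
where `h(x) = x(log x − 1) + 1`. -/
theorem radius_of_contraction (c τ : ℝ) (hc : 0 < c) (f g : ℝ → ℝ)
    (hfg : ∀ u ∈ Set.Icc (0 : ℝ) τ, |f u - g u| ≤ c / 4)
    (s t : ℝ) (hs : s ∈ Set.Icc (0 : ℝ) τ) (ht : t ∈ Set.Icc (0 : ℝ) τ)
    (hinc : f t - f s ≥ c) :
    g t - g s ≥ (f t - f s) / 2 ∧ 0 < g t - g s ∧
      ((f t - f s) / (g t - g s)) * (Real.log ((f t - f s) / (g t - g s)) - 1) + 1 ≥
        (1 / 3) * ((f t - f s) / (g t - g s) - 1) ^ 2 := by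
  obtain ⟨hts, hst⟩ := abs_le.mp (hfg t ht)
  obtain ⟨hss, hsf⟩ := abs_le.mp (hfg s hs)
  have hhalf : g t - g s ≥ (f t - f s) / 2 := by linarith
  have hpos : 0 < g t - g s := by linarith
  refine ⟨hhalf, hpos, Real.sq_sub_one_div_three_le_mul_log_sub_one_add_one ?_ ?_⟩
  · exact div_pos (by linarith) hpos
  · rw [div_le_iff₀ hpos]; linarith
end
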